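/- arXiv:2102.10922 — 5 statements merged into one kernel-verified Lean document; each statement's English description precedes it below -/
import Mathlib

section
/- Let n ≥ 2, 0 ≤ R₁ < 1, 0 < R₂, and let G = {x + iy ∈ ℂⁿ : R₁ < ‖x‖ < 1, ‖y‖ < R₂}. The set E = conv(G) ∩ {x + iy : ‖y‖² < ‖x‖² − (R₁² − R₂²)} is an open connected subset of ℂⁿ containing G. -/
open Complex

noncomputable def rePart {n : ℕ} (z : EuclideanSpace ℂ (Fin n)) : EuclideanSpace ℝ (Fin n) :=
  (WithLp.equiv 2 (Fin n → ℝ)).symm fun i => (z i).re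

noncomputable def imPart {n : ℕ} (z : EuclideanSpace ℂ (Fin n)) : EuclideanSpace ℝ (Fin n) :=
  (WithLp.equiv 2 (Fin n → ℝ)).symm fun i => (z i).im

noncomputable def reL (n : ℕ) : EuclideanSpace ℂ (Fin n) →ₗ[ℝ] EuclideanSpace ℝ (Fin n) where
  toFun := rePart
  map_add' z w := by ext i; rfl
  map_smul' r z := by
    ext i; show (r • z i).re = r * (z i).re; simp [Complex.real_smul]

noncomputable def imL (n : ℕ) : EuclideanSpace ℂ (Fin n) →ₗ[ℝ] EuclideanSpace ℝ (Fin n) where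
  toFun := imPart
  map_add' z w := by ext i; rfl
  map_smul' r z := by
    ext i; show (r • z i).im = r * (z i).im; simp [Complex.real_smul]

noncomputable def iotaL (n : ℕ) : EuclideanSpace ℝ (Fin n) →ₗ[ℝ] EuclideanSpace ℂ (Fin n) where
  toFun x := (WithLp.equiv 2 (Fin n → ℂ)).symm fun i => ((x i : ℝ) : ℂ)
  map_add' x y := by ext i; exact Complex.ofReal_add _ _
  map_smul' r x := by
    ext i; show ((r * x i : ℝ) : ℂ) = r • ((x i : ℝ) : ℂ)
    simp [Complex.real_smul]

lemma rePart_iota {n : ℕ} (x : EuclideanSpace ℝ (Fin n)) : rePart (iotaL n x) = x := by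
  rfl

lemma imPart_iota {n : ℕ} (x : EuclideanSpace ℝ (Fin n)) : imPart (iotaL n x) = 0 := by
  rfl

lemma exists_orth {n : ℕ} (hn : 2 ≤ n) (x : EuclideanSpace ℝ (Fin n)) {c : ℝ} (hc : 0 ≤ c) :
    ∃ w : EuclideanSpace ℝ (Fin n), inner ℝ x w = (0:ℝ) ∧ ‖w‖ = c := by
  have hne : ((ℝ ∙ x)ᗮ : Submodule ℝ (EuclideanSpace ℝ (Fin n))) ≠ ⊥ := by
    intro h
    have h1 := Submodule.finrank_add_finrank_orthogonal (K := (ℝ ∙ x))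
    rw [h, finrank_bot, finrank_euclideanSpace_fin] at h1
    have h2 : Module.finrank ℝ (ℝ ∙ x) ≤ 1 := by
      by_cases hx : x = 0
      · rw [hx, Submodule.span_zero_singleton, finrank_bot]; omega
      · rw [finrank_span_singleton hx]
    omega
  obtain ⟨v, hv, hv0⟩ := Submodule.exists_mem_ne_zero_of_ne_bot hne
  refine ⟨(c / ‖v‖) • v, ?_, ?_⟩
  · have := (Submodule.mem_orthogonal _ _).1 hv x (Submodule.mem_span_singleton_self x)
    rw [real_inner_smul_right, this, mul_zero]
  · rw [norm_smul, Real.norm_eq_abs, abs_div, _root_.abs_of_nonneg hc, abs_norm,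
      div_mul_cancel₀]
    exact norm_ne_zero_iff.2 hv0


noncomputable def tubeG (n : ℕ) (R1 R2 : ℝ) : Set (EuclideanSpace ℂ (Fin n)) :=
  {z | R1 < ‖rePart z‖ ∧ ‖rePart z‖ < 1 ∧ ‖imPart z‖ < R2}

lemma rePart_eq {n : ℕ} (z : EuclideanSpace ℂ (Fin n)) : rePart z = reL n z := rfl
lemma imPart_eq {n : ℕ} (z : EuclideanSpace ℂ (Fin n)) : imPart z = imL n z := rfl

lemma hull_eq (n : ℕ) (hn : 2 ≤ n) (R1 R2 : ℝ) (hR1 : 0 ≤ R1) (hR1' : R1 < 1) (hR2 : 0 < R2) :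
    convexHull ℝ (tubeG n R1 R2) = {z | ‖rePart z‖ < 1 ∧ ‖imPart z‖ < R2} := by
  apply le_antisymm
  · apply convexHull_min
    · intro z hz; exact ⟨hz.2.1, hz.2.2⟩
    · have h1 : Convex ℝ {z : EuclideanSpace ℂ (Fin n) | ‖rePart z‖ < 1} := by
        have he : {z : EuclideanSpace ℂ (Fin n) | ‖rePart z‖ < 1}
            = reL n ⁻¹' Metric.ball 0 1 := by
          ext z; simp [Metric.mem_ball, dist_zero_right, rePart_eq]
        rw [he]
        exact (convex_ball 0 1).linear_preimage _
      have h2 : Convex ℝ {z : EuclideanSpace ℂ (Fin n) | ‖imPart z‖ < R2} := by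
        have he : {z : EuclideanSpace ℂ (Fin n) | ‖imPart z‖ < R2}
            = imL n ⁻¹' Metric.ball 0 R2 := by
          ext z; simp [Metric.mem_ball, dist_zero_right, imPart_eq]
        rw [he]
        exact (convex_ball 0 R2).linear_preimage _
      exact h1.inter h2
  · rintro z ⟨hx1, hy2⟩
    set x := rePart z with hx
    set y := imPart z with hy
    by_cases hxR : R1 < ‖x‖
    · exact subset_convexHull ℝ _ ⟨hxR, hx1, hy2⟩
    push_neg at hxR
    have hc2 : (0:ℝ) < (R1 ^ 2 + 1) / 2 - ‖x‖ ^ 2 := by nlinarith [norm_nonneg x]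
    obtain ⟨w, hw0, hwn⟩ := exists_orth hn x (Real.sqrt_nonneg ((R1 ^ 2 + 1) / 2 - ‖x‖ ^ 2))
    have hwsq : ‖w‖ ^ 2 = (R1 ^ 2 + 1) / 2 - ‖x‖ ^ 2 := by
      rw [hwn, Real.sq_sqrt hc2.le]
    have hplus : ‖x + w‖ ^ 2 = (R1 ^ 2 + 1) / 2 := by
      rw [norm_add_sq_real, hw0]; linarith [hwsq]
    have hminus : ‖x - w‖ ^ 2 = (R1 ^ 2 + 1) / 2 := by
      rw [norm_sub_sq_real, hw0]; linarith [hwsq]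
    have hrep : rePart (z + iotaL n w) = x + w := by
      rw [rePart_eq, map_add, ← rePart_eq, ← rePart_eq, rePart_iota, ← hx]
    have himp : imPart (z + iotaL n w) = y := by
      rw [imPart_eq, map_add, ← imPart_eq, ← imPart_eq, imPart_iota, ← hy, add_zero]
    have hrem : rePart (z - iotaL n w) = x - w := by
      rw [rePart_eq, map_sub, ← rePart_eq, ← rePart_eq, rePart_iota, ← hx]
    have himm : imPart (z - iotaL n w) = y := by
      rw [imPart_eq, map_sub, ← imPart_eq, ← imPart_eq, imPart_iota, ← hy, sub_zero]
    have key : ∀ u : EuclideanSpace ℝ (Fin n), ‖u‖ ^ 2 = (R1 ^ 2 + 1) / 2 →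
        R1 < ‖u‖ ∧ ‖u‖ < 1 := by
      intro u hu
      constructor
      · refine lt_of_pow_lt_pow_left₀ 2 (norm_nonneg u) ?_
        rw [hu]; nlinarith
      · refine lt_of_pow_lt_pow_left₀ 2 zero_le_one ?_
        rw [hu]; nlinarith
    have hp : z + iotaL n w ∈ tubeG n R1 R2 :=
      ⟨by rw [hrep]; exact (key _ hplus).1, by rw [hrep]; exact (key _ hplus).2,
        by rw [himp]; exact hy2⟩
    have hm : z - iotaL n w ∈ tubeG n R1 R2 :=
      ⟨by rw [hrem]; exact (key _ hminus).1, by rw [hrem]; exact (key _ hminus).2,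
        by rw [himm]; exact hy2⟩
    have hmid : z = (1/2 : ℝ) • (z + iotaL n w) + (1/2 : ℝ) • (z - iotaL n w) := by
      rw [smul_add, smul_sub, add_add_sub_cancel, ← add_smul]
      norm_num
    rw [hmid]
    exact (convex_convexHull ℝ _) (subset_convexHull ℝ _ hp) (subset_convexHull ℝ _ hm)
      (by norm_num) (by norm_num) (by norm_num)


lemma rePart_combo {n : ℕ} (a b : ℝ) (z w : EuclideanSpace ℂ (Fin n)) :
    rePart (a • z + b • w) = a • rePart z + b • rePart w := by
  rw [rePart_eq, map_add, map_smul, map_smul, ← rePart_eq, ← rePart_eq]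

lemma imPart_combo {n : ℕ} (a b : ℝ) (z w : EuclideanSpace ℂ (Fin n)) :
    imPart (a • z + b • w) = a • imPart z + b • imPart w := by
  rw [imPart_eq, map_add, map_smul, map_smul, ← imPart_eq, ← imPart_eq]

set_option maxHeartbeats 2000000 in
theorem stmt_2 (n : ℕ) (hn : 2 ≤ n) (R1 R2 : ℝ) (hR1 : 0 ≤ R1) (hR1' : R1 < 1) (hR2 : 0 < R2)
    (E : Set (EuclideanSpace ℂ (Fin n)))
    (hE : E = convexHull ℝ (tubeG n R1 R2) ∩
      {z | ‖imPart z‖ ^ 2 < ‖rePart z‖ ^ 2 - (R1 ^ 2 - R2 ^ 2)}) :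
    IsOpen E ∧ IsConnected E ∧ tubeG n R1 R2 ⊆ E := by
  have cre : Continuous fun z : EuclideanSpace ℂ (Fin n) => ‖rePart z‖ :=
    (reL n).continuous_of_finiteDimensional.norm
  have cim : Continuous fun z : EuclideanSpace ℂ (Fin n) => ‖imPart z‖ :=
    (imL n).continuous_of_finiteDimensional.norm
  have hEmem : ∀ w : EuclideanSpace ℂ (Fin n), w ∈ E ↔
      (‖rePart w‖ < 1 ∧ ‖imPart w‖ < R2 ∧
        ‖imPart w‖ ^ 2 < ‖rePart w‖ ^ 2 - (R1 ^ 2 - R2 ^ 2)) := by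
    intro w
    rw [hE, hull_eq n hn R1 R2 hR1 hR1' hR2]
    simp only [Set.mem_inter_iff, Set.mem_setOf_eq, and_assoc]
  -- the base point
  set r0 : ℝ := (1 + R1) / 2 with hr0
  have hr0a : R1 < r0 := by rw [hr0]; linarith
  have hr0b : r0 < 1 := by rw [hr0]; linarith
  have hr0pos : 0 < r0 := lt_of_le_of_lt hR1 hr0a
  have i0 : Fin n := ⟨0, by omega⟩
  set v0 : EuclideanSpace ℝ (Fin n) := EuclideanSpace.single i0 r0 with hv0
  have hv0n : ‖v0‖ = r0 := by
    rw [hv0, EuclideanSpace.norm_single, Real.norm_eq_abs, _root_.abs_of_pos hr0pos]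
  set x0 : EuclideanSpace ℂ (Fin n) := iotaL n v0 with hx0
  set S : Set (EuclideanSpace ℂ (Fin n)) := iotaL n '' Metric.sphere 0 r0 with hS
  have hx0S : x0 ∈ S := ⟨v0, by rw [mem_sphere_zero_iff_norm, hv0n], rfl⟩
  have hSE : S ⊆ E := by
    rintro _ ⟨v, hv, rfl⟩
    rw [mem_sphere_zero_iff_norm] at hv
    rw [hEmem, rePart_iota, imPart_iota, hv, norm_zero]
    exact ⟨hr0b, hR2, by nlinarith⟩
  have hrank : 1 < Module.rank ℝ (EuclideanSpace ℝ (Fin n)) := by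
    have h1 : Module.rank ℝ (EuclideanSpace ℝ (Fin n))
        = (Module.finrank ℝ (EuclideanSpace ℝ (Fin n)) : Cardinal) :=
      (Module.finrank_eq_rank ℝ _).symm
    rw [h1, finrank_euclideanSpace_fin]
    exact_mod_cast (by omega : 1 < n)
  have hSconn : IsPreconnected S :=
    ((isConnected_sphere hrank 0 hr0pos.le).image _
      (iotaL n).continuous_of_finiteDimensional.continuousOn).isPreconnected
  refine ⟨?_, ?_, ?_⟩
  · -- open
    rw [hE, hull_eq n hn R1 R2 hR1 hR1' hR2]
    have o1 : IsOpen {z : EuclideanSpace ℂ (Fin n) | ‖rePart z‖ < 1} :=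
      isOpen_lt cre continuous_const
    have o2 : IsOpen {z : EuclideanSpace ℂ (Fin n) | ‖imPart z‖ < R2} :=
      isOpen_lt cim continuous_const
    have o3 : IsOpen {z : EuclideanSpace ℂ (Fin n) |
        ‖imPart z‖ ^ 2 < ‖rePart z‖ ^ 2 - (R1 ^ 2 - R2 ^ 2)} :=
      isOpen_lt (cim.pow 2) ((cre.pow 2).sub continuous_const)
    exact ((o1.inter o2).inter o3)
  · -- connected
    refine ⟨⟨x0, hSE hx0S⟩, isPreconnected_of_forall x0 ?_⟩
    intro z hz
    rw [hEmem] at hz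
    obtain ⟨hx1, hy2, hq⟩ := hz
    set x := rePart z with hx
    set y := imPart z with hy
    set P : EuclideanSpace ℂ (Fin n) := iotaL n x with hP
    have hseg1 : segment ℝ z P ⊆ E := by
      rintro _ ⟨a, b, ha, hb, hab, rfl⟩
      have hre : rePart (a • z + b • P) = x := by
        rw [rePart_combo, hP, rePart_iota, ← hx, ← add_smul, hab, one_smul]
      have him : imPart (a • z + b • P) = a • y := by
        rw [imPart_combo, hP, imPart_iota, ← hy, smul_zero, add_zero]
      have hay : ‖a • y‖ = a * ‖y‖ := by
        rw [norm_smul, Real.norm_eq_abs, _root_.abs_of_nonneg ha]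
      rw [hEmem, hre, him, hay]
      have ha1 : a ≤ 1 := by linarith
      have hayle : a * ‖y‖ ≤ ‖y‖ := by nlinarith [norm_nonneg y]
      have hsq : (a * ‖y‖) ^ 2 ≤ ‖y‖ ^ 2 :=
        pow_le_pow_left₀ (mul_nonneg ha (norm_nonneg y)) hayle 2
      exact ⟨hx1, lt_of_le_of_lt hayle hy2, by linarith⟩
    have hK : R1 ^ 2 - R2 ^ 2 < ‖x‖ ^ 2 := by nlinarith [norm_nonneg y]
    obtain ⟨z₂, hz₂S, hseg2⟩ : ∃ z₂ ∈ S, segment ℝ P z₂ ⊆ E := by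
      by_cases hxz : x = 0
      · refine ⟨x0, hx0S, ?_⟩
        have hKneg : R1 ^ 2 - R2 ^ 2 < 0 := by
          rw [hxz, norm_zero] at hK; nlinarith
        rintro _ ⟨a, b, ha, hb, hab, rfl⟩
        have hform : a • P + b • x0 = iotaL n (a • x + b • v0) := by
          rw [map_add, map_smul, map_smul, hP, hx0]
        rw [hEmem, hform, rePart_iota, imPart_iota, norm_zero]
        have hnm : ‖a • x + b • v0‖ = b * r0 := by
          rw [hxz, smul_zero, zero_add, norm_smul, Real.norm_eq_abs,
            _root_.abs_of_nonneg hb, hv0n]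
        rw [hnm]
        refine ⟨by nlinarith, hR2, by nlinarith⟩
      · have hxpos : 0 < ‖x‖ := norm_pos_iff.2 hxz
        refine ⟨iotaL n ((r0 / ‖x‖) • x), ⟨(r0 / ‖x‖) • x, ?_, rfl⟩, ?_⟩
        · rw [mem_sphere_zero_iff_norm, norm_smul, Real.norm_eq_abs, abs_div,
            _root_.abs_of_pos hr0pos, abs_norm, div_mul_cancel₀ _ hxpos.ne']
        · rintro _ ⟨a, b, ha, hb, hab, rfl⟩
          have hform : a • P + b • iotaL n ((r0 / ‖x‖) • x)
              = iotaL n ((a + b * (r0 / ‖x‖)) • x) := by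
            rw [hP, ← map_smul, ← map_smul, ← map_add, smul_smul, ← add_smul]
          have hcoef : 0 ≤ a + b * (r0 / ‖x‖) := by positivity
          have hnm : ‖(a + b * (r0 / ‖x‖)) • x‖ = a * ‖x‖ + b * r0 := by
            rw [norm_smul, Real.norm_eq_abs, _root_.abs_of_nonneg hcoef]
            field_simp
          rw [hEmem, hform, rePart_iota, imPart_iota, norm_zero, hnm]
          have hc1 : a * ‖x‖ + b * r0 < 1 := by
            have p2 : b * r0 ≤ b * 1 := mul_le_mul_of_nonneg_left hr0b.le hb
            rcases eq_or_lt_of_le ha with h0 | h0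
            · have hbb : b = 1 := by linarith
              rw [← h0, hbb]; simpa using hr0b
            · have p1 : a * ‖x‖ < a * 1 := mul_lt_mul_of_pos_left hx1 h0
              linarith
          have hcmin : ‖x‖ ≤ a * ‖x‖ + b * r0 ∨ r0 ≤ a * ‖x‖ + b * r0 := by
            rcases le_total ‖x‖ r0 with h | h
            · left; nlinarith
            · right; nlinarith
          refine ⟨hc1, hR2, ?_⟩
          have hcnn : 0 ≤ a * ‖x‖ + b * r0 := by positivity
          rcases hcmin with h | h
          · have := mul_self_le_mul_self hxpos.le h
            nlinarith
          · have := mul_self_le_mul_self hr0pos.le h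
            nlinarith
    refine ⟨segment ℝ z P ∪ segment ℝ P z₂ ∪ S, ?_, ?_, ?_, ?_⟩
    · exact Set.union_subset (Set.union_subset hseg1 hseg2) hSE
    · exact Set.mem_union_right _ hx0S
    · exact Set.mem_union_left _ (Set.mem_union_left _ (left_mem_segment ℝ z P))
    · refine IsPreconnected.union z₂ ?_ hz₂S ?_ hSconn
      · exact Set.mem_union_right _ (right_mem_segment ℝ P z₂)
      · refine IsPreconnected.union P (right_mem_segment ℝ z P) (left_mem_segment ℝ P z₂)
          (convex_segment z P).isPreconnected (convex_segment P z₂).isPreconnected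
  · -- G ⊆ E
    intro z hz
    obtain ⟨h1, h2, h3⟩ := hz
    rw [hEmem]
    exact ⟨h2, h3, by nlinarith [norm_nonneg (imPart z), norm_nonneg (rePart z)]⟩
end

section
/- Let n ≥ 2, 0 ≤ R₁ < 1, 0 < R₂. The convex hull of G = {x + iy ∈ ℂⁿ : R₁ < ‖x‖ < 1, ‖y‖ < R₂} equals {x + iy ∈ ℂⁿ : ‖x‖ < 1, ‖y‖ < R₂}. -/
open Complex

noncomputable def ofRe {n : ℕ} (x : EuclideanSpace ℝ (Fin n)) : EuclideanSpace ℂ (Fin n) :=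
  (WithLp.equiv 2 (Fin n → ℂ)).symm fun i => (x i : ℂ)

lemma rePart_apply {n : ℕ} (z : EuclideanSpace ℂ (Fin n)) (i : Fin n) :
    rePart z i = (z i).re := rfl

lemma imPart_apply {n : ℕ} (z : EuclideanSpace ℂ (Fin n)) (i : Fin n) :
    imPart z i = (z i).im := rfl

lemma rePart_add {n : ℕ} (z w : EuclideanSpace ℂ (Fin n)) :
    rePart (z + w) = rePart z + rePart w := by
  ext i; simp [rePart_apply]

lemma rePart_smul {n : ℕ} (a : ℝ) (z : EuclideanSpace ℂ (Fin n)) :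
    rePart (a • z) = a • rePart z := by
  ext i; simp [rePart_apply]

lemma imPart_add {n : ℕ} (z w : EuclideanSpace ℂ (Fin n)) :
    imPart (z + w) = imPart z + imPart w := by
  ext i; simp [imPart_apply]

lemma imPart_smul {n : ℕ} (a : ℝ) (z : EuclideanSpace ℂ (Fin n)) :
    imPart (a • z) = a • imPart z := by
  ext i; simp [imPart_apply]

lemma rePart_ofRe {n : ℕ} (x : EuclideanSpace ℝ (Fin n)) : rePart (ofRe x) = x := by
  ext i; simp [rePart_apply, ofRe]

lemma imPart_ofRe {n : ℕ} (x : EuclideanSpace ℝ (Fin n)) : imPart (ofRe x) = 0 := by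
  ext i; simp [imPart_apply, ofRe]

lemma rePart_neg {n : ℕ} (z : EuclideanSpace ℂ (Fin n)) : rePart (-z) = -rePart z := by
  ext i; simp [rePart_apply]

lemma imPart_neg {n : ℕ} (z : EuclideanSpace ℂ (Fin n)) : imPart (-z) = -imPart z := by
  ext i; simp [imPart_apply]

theorem stmt_3 (n : ℕ) (hn : 2 ≤ n) (R1 R2 : ℝ) (hR1 : 0 ≤ R1) (hR1' : R1 < 1) (hR2 : 0 < R2) :
    convexHull ℝ (tubeG n R1 R2) =
      {z : EuclideanSpace ℂ (Fin n) | ‖rePart z‖ < 1 ∧ ‖imPart z‖ < R2} := by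
  have hconv : Convex ℝ {z : EuclideanSpace ℂ (Fin n) | ‖rePart z‖ < 1 ∧ ‖imPart z‖ < R2} := by
    intro z1 hz1 z2 hz2 a b ha hb hab
    constructor
    · calc ‖rePart (a • z1 + b • z2)‖ = ‖a • rePart z1 + b • rePart z2‖ := by
            rw [rePart_add, rePart_smul, rePart_smul]
      _ ≤ a * ‖rePart z1‖ + b * ‖rePart z2‖ := by
            refine (norm_add_le _ _).trans ?_
            rw [norm_smul, norm_smul, Real.norm_of_nonneg ha, Real.norm_of_nonneg hb]
      _ < a * 1 + b * 1 := by
            rcases eq_or_lt_of_le ha with h | h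
            · rcases eq_or_lt_of_le hb with h' | h'
              · exfalso; rw [← h, ← h'] at hab; norm_num at hab
              · have := hz2.1
                rw [← h]; simp only [zero_mul, zero_add]
                exact mul_lt_mul_of_pos_left hz2.1 h'
            · rcases eq_or_lt_of_le hb with h' | h'
              · rw [← h']; simp only [zero_mul, add_zero]
                exact mul_lt_mul_of_pos_left hz1.1 h
              · exact add_lt_add (mul_lt_mul_of_pos_left hz1.1 h)
                  (mul_lt_mul_of_pos_left hz2.1 h')
      _ = a + b := by ring
      _ = 1 := hab
    · calc ‖imPart (a • z1 + b • z2)‖ = ‖a • imPart z1 + b • imPart z2‖ := by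
            rw [imPart_add, imPart_smul, imPart_smul]
      _ ≤ a * ‖imPart z1‖ + b * ‖imPart z2‖ := by
            refine (norm_add_le _ _).trans ?_
            rw [norm_smul, norm_smul, Real.norm_of_nonneg ha, Real.norm_of_nonneg hb]
      _ < R2 := by
            rcases eq_or_lt_of_le ha with h | h
            · rcases eq_or_lt_of_le hb with h' | h'
              · exfalso; rw [← h, ← h'] at hab; norm_num at hab
              · rw [← h]; simp only [zero_mul, zero_add]
                calc b * ‖imPart z2‖ < b * R2 := mul_lt_mul_of_pos_left hz2.2 h'
                _ ≤ 1 * R2 := by nlinarith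
                _ = R2 := one_mul _
            · rcases eq_or_lt_of_le hb with h' | h'
              · rw [← h']; simp only [zero_mul, add_zero]
                calc a * ‖imPart z1‖ < a * R2 := mul_lt_mul_of_pos_left hz1.2 h
                _ ≤ 1 * R2 := by nlinarith
                _ = R2 := one_mul _
              · calc a * ‖imPart z1‖ + b * ‖imPart z2‖
                    < a * R2 + b * R2 := add_lt_add (mul_lt_mul_of_pos_left hz1.2 h)
                      (mul_lt_mul_of_pos_left hz2.2 h')
                _ = R2 := by rw [← add_mul, hab, one_mul]
  apply le_antisymm
  · exact convexHull_min (fun z hz => ⟨hz.2.1, hz.2.2⟩) hconv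
  · intro z hz
    rcases lt_or_ge R1 ‖rePart z‖ with h | h
    · exact subset_convexHull ℝ _ ⟨h, hz.1, hz.2⟩
    · -- need orthogonal vector
      set x := rePart z with hx
      haveI : FiniteDimensional ℝ (EuclideanSpace ℝ (Fin n)) := by infer_instance
      have hK : 0 < Module.finrank ℝ ((ℝ ∙ x)ᗮ : Submodule ℝ (EuclideanSpace ℝ (Fin n))) := by
        have h1 : Module.finrank ℝ (ℝ ∙ x : Submodule ℝ (EuclideanSpace ℝ (Fin n))) ≤ 1 := by
          rcases eq_or_ne x 0 with h0 | h0
          · rw [h0, Submodule.span_zero_singleton, finrank_bot]; norm_num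
          · rw [finrank_span_singleton h0]
        have h2 := Submodule.finrank_add_finrank_orthogonal (K := (ℝ ∙ x : Submodule ℝ (EuclideanSpace ℝ (Fin n))))
        have h3 : Module.finrank ℝ (EuclideanSpace ℝ (Fin n)) = n := by
          simp [finrank_euclideanSpace]
        omega
      have hKne : ((ℝ ∙ x)ᗮ : Submodule ℝ (EuclideanSpace ℝ (Fin n))) ≠ ⊥ := by
        intro hbot
        rw [hbot, finrank_bot] at hK
        exact lt_irrefl 0 hK
      obtain ⟨v, hvK, hv0⟩ := Submodule.exists_mem_ne_zero_of_ne_bot hKne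
      have hvx : inner ℝ x v = (0 : ℝ) :=
        (Submodule.mem_orthogonal _ _).1 hvK x (Submodule.mem_span_singleton_self x)
      -- normalize
      set u := ‖v‖⁻¹ • v with hu
      have hun : ‖u‖ = 1 := by
        rw [hu, norm_smul, norm_inv, norm_norm, inv_mul_cancel₀ (norm_ne_zero_iff.2 hv0)]
      have hux : inner ℝ x u = (0 : ℝ) := by
        rw [hu, inner_smul_right, hvx, mul_zero]
      set t := Real.sqrt ((R1 ^ 2 + 1) / 2 - ‖x‖ ^ 2) with ht
      have hxR : ‖x‖ ^ 2 ≤ R1 ^ 2 := by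
        have := norm_nonneg x; nlinarith
      have htpos : 0 < (R1 ^ 2 + 1) / 2 - ‖x‖ ^ 2 := by nlinarith
      have ht2 : t ^ 2 = (R1 ^ 2 + 1) / 2 - ‖x‖ ^ 2 := Real.sq_sqrt htpos.le
      have hnorm : ∀ s : ℝ, s = 1 ∨ s = -1 → ‖x + s • (t • u)‖ ^ 2 = (R1 ^ 2 + 1) / 2 := by
        intro s hs
        have hinner : inner ℝ x (s • (t • u)) = (0 : ℝ) := by
          rw [inner_smul_right, inner_smul_right, hux]; ring
        rw [norm_add_sq_real, hinner]
        have : ‖s • (t • u)‖ = t := by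
          rcases hs with h | h <;>
            simp [h, norm_smul, hun, Real.norm_of_nonneg (Real.sqrt_nonneg _), ht, _root_.abs_of_nonneg (Real.sqrt_nonneg _)]
        rw [this]
        rw [ht2]; ring
      have hmem : ∀ s : ℝ, s = 1 ∨ s = -1 → z + s • ofRe (t • u) ∈ tubeG n R1 R2 := by
        intro s hs
        have hre : rePart (z + s • ofRe (t • u)) = x + s • (t • u) := by
          rw [rePart_add, rePart_smul, rePart_ofRe, hx]
        have him : imPart (z + s • ofRe (t • u)) = imPart z := by
          rw [imPart_add, imPart_smul, imPart_ofRe, smul_zero, add_zero]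
        have hns := hnorm s hs
        have h1 : R1 < ‖x + s • (t • u)‖ := by
          nlinarith [norm_nonneg (x + s • (t • u))]
        have h2 : ‖x + s • (t • u)‖ < 1 := by
          nlinarith [norm_nonneg (x + s • (t • u))]
        exact ⟨by rw [hre]; exact h1, by rw [hre]; exact h2, by rw [him]; exact hz.2⟩
      have hz1 := subset_convexHull ℝ _ (hmem 1 (Or.inl rfl))
      have hz2 := subset_convexHull ℝ _ (hmem (-1) (Or.inr rfl))
      have key : z = (1/2 : ℝ) • (z + (1 : ℝ) • ofRe (t • u)) +
          (1/2 : ℝ) • (z + (-1 : ℝ) • ofRe (t • u)) := by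
        module
      rw [key]
      exact (convex_convexHull ℝ _) hz1 hz2 (by norm_num) (by norm_num) (by norm_num)
end

section
/- Let n ≥ 2, 0 ≤ R₁ < 1, 0 < R₂, and let a + ib ∈ ℂⁿ satisfy ‖a‖ ≤ R₁, ‖a‖ < 1, ‖b‖ < R₂, and ‖b‖² < ‖a‖² − (R₁² − R₂²). Choose ε > 0 with R₁² + 2ε < 1 and ‖b‖² + 2ε < ‖a‖² − (R₁² − R₂²). Define U₁ := {x̃ + iỹ ∈ ℂⁿ⁻¹ : ‖ã‖² − ε/4 < ‖x̃‖² < 1 − aₙ² − ε/2, ‖ỹ‖² < ‖b̃‖² + ε/2}, U₂ := {xₙ + iyₙ ∈ ℂ : aₙ² − ε/4 < xₙ² < aₙ² + ε/2, yₙ² < bₙ² + ε/2}, and U₁' := {x̃ + iỹ ∈ U₁ : 1 − aₙ² − 3ε/2 < ‖x̃‖² < 1 − aₙ² − ε/2}. Then a + ib ∈ U₁ × U₂ and U₁' × U₂ is nonempty and contained in G = {x + iy : R₁ < ‖x‖ < 1, ‖y‖ < R₂}. -/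
open Complex

/-- Build `x + iy ∈ ℂᵐ` from real vectors `x, y ∈ ℝᵐ`. -/
noncomputable def mkC {m : ℕ} (x y : EuclideanSpace ℝ (Fin m)) : EuclideanSpace ℂ (Fin m) :=
  (WithLp.equiv 2 (Fin m → ℂ)).symm fun i => (x i : ℂ) + (y i : ℂ) * Complex.I

/-- The truncated tube `G ⊆ ℂⁿ = ℂⁿ⁻¹ × ℂ` (here `m = n - 1`). -/
noncomputable def tubeGProd (m : ℕ) (R1 R2 : ℝ) : Set (EuclideanSpace ℂ (Fin m) × ℂ) :=
  {p | R1 < Real.sqrt (‖rePart p.1‖ ^ 2 + p.2.re ^ 2) ∧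
       Real.sqrt (‖rePart p.1‖ ^ 2 + p.2.re ^ 2) < 1 ∧
       Real.sqrt (‖imPart p.1‖ ^ 2 + p.2.im ^ 2) < R2}


lemma rePart_mkC {m : ℕ} (x y : EuclideanSpace ℝ (Fin m)) : rePart (mkC x y) = x := by
  ext i; simp [rePart, mkC]

lemma imPart_mkC {m : ℕ} (x y : EuclideanSpace ℝ (Fin m)) : imPart (mkC x y) = y := by
  ext i; simp [imPart, mkC]

theorem stmt_11 (m : ℕ) (hm : 1 ≤ m) (R1 R2 : ℝ) (hR1 : 0 ≤ R1) (hR1' : R1 < 1) (hR2 : 0 < R2)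
    (at_ bt : EuclideanSpace ℝ (Fin m)) (an bn : ℝ)
    (haR1 : Real.sqrt (‖at_‖ ^ 2 + an ^ 2) ≤ R1)
    (ha1 : Real.sqrt (‖at_‖ ^ 2 + an ^ 2) < 1)
    (hb : Real.sqrt (‖bt‖ ^ 2 + bn ^ 2) < R2)
    (hab : ‖bt‖ ^ 2 + bn ^ 2 < (‖at_‖ ^ 2 + an ^ 2) - (R1 ^ 2 - R2 ^ 2))
    (ε : ℝ) (hε0 : 0 < ε) (hε1 : R1 ^ 2 + 2 * ε < 1)
    (hε2 : ‖bt‖ ^ 2 + bn ^ 2 + 2 * ε < (‖at_‖ ^ 2 + an ^ 2) - (R1 ^ 2 - R2 ^ 2))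
    (U1 U1' : Set (EuclideanSpace ℂ (Fin m))) (U2 : Set ℂ)
    (hU1 : U1 = {zt | ‖at_‖ ^ 2 - ε / 4 < ‖rePart zt‖ ^ 2 ∧
        ‖rePart zt‖ ^ 2 < 1 - an ^ 2 - ε / 2 ∧ ‖imPart zt‖ ^ 2 < ‖bt‖ ^ 2 + ε / 2})
    (hU2 : U2 = {w : ℂ | an ^ 2 - ε / 4 < w.re ^ 2 ∧ w.re ^ 2 < an ^ 2 + ε / 2 ∧
        w.im ^ 2 < bn ^ 2 + ε / 2})
    (hU1' : U1' = {zt ∈ U1 | 1 - an ^ 2 - 3 * ε / 2 < ‖rePart zt‖ ^ 2 ∧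
        ‖rePart zt‖ ^ 2 < 1 - an ^ 2 - ε / 2}) :
    (mkC at_ bt, (an : ℂ) + (bn : ℂ) * Complex.I) ∈ U1 ×ˢ U2 ∧
    (U1' ×ˢ U2).Nonempty ∧ U1' ×ˢ U2 ⊆ tubeGProd m R1 R2 := by
  have hs : ‖at_‖ ^ 2 + an ^ 2 ≤ R1 ^ 2 := by
    nlinarith [Real.sq_sqrt (show (0:ℝ) ≤ ‖at_‖ ^ 2 + an ^ 2 by positivity),
      Real.sqrt_nonneg (‖at_‖ ^ 2 + an ^ 2)]
  have hat2 : 0 ≤ ‖at_‖ ^ 2 := by positivity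
  have han2 : 0 ≤ an ^ 2 := by positivity
  have hwre : ((an : ℂ) + (bn : ℂ) * Complex.I).re = an := by simp
  have hwim : ((an : ℂ) + (bn : ℂ) * Complex.I).im = bn := by simp
  refine ⟨⟨?_, ?_⟩, ?_, ?_⟩
  · rw [hU1]
    simp only [Set.mem_setOf_eq, rePart_mkC, imPart_mkC]
    refine ⟨by linarith, by linarith, by linarith⟩
  · rw [hU2]
    simp only [Set.mem_setOf_eq, hwre, hwim]
    refine ⟨by linarith, by linarith, by linarith⟩
  · -- nonemptiness
    have hc : (0:ℝ) ≤ 1 - an ^ 2 - ε := by linarith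
    set c := Real.sqrt (1 - an ^ 2 - ε) with hcdef
    have hc2 : c ^ 2 = 1 - an ^ 2 - ε := Real.sq_sqrt hc
    refine ⟨(mkC (EuclideanSpace.single ⟨0, hm⟩ c) bt, (an : ℂ) + (bn : ℂ) * Complex.I), ?_, ?_⟩
    · rw [hU1']
      have hnorm : ‖rePart (mkC (EuclideanSpace.single ⟨0, hm⟩ c) bt)‖ ^ 2 = 1 - an ^ 2 - ε := by
        rw [rePart_mkC, EuclideanSpace.norm_single, Real.norm_eq_abs, _root_.sq_abs, hc2]
      simp only [Set.mem_setOf_eq, hnorm, hU1, imPart_mkC]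
      refine ⟨⟨by linarith, by linarith, by linarith⟩, by linarith, by linarith⟩
    · rw [hU2]
      simp only [Set.mem_setOf_eq, hwre, hwim]
      refine ⟨by linarith, by linarith, by linarith⟩
  · rintro ⟨z, w⟩ hp
    have hz := hp.1
    have hw := hp.2
    simp only [hU1', hU1, Set.mem_setOf_eq] at hz
    rw [hU2] at hw
    obtain ⟨⟨_, _, hzim⟩, hz1, hz2⟩ := hz
    obtain ⟨hw1, hw2, hw3⟩ := hw
    clear hp hU1 hU1' hU2
    have hzim2 : 0 ≤ ‖imPart z‖ ^ 2 := by positivity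
    have hwim2 : 0 ≤ w.im ^ 2 := by positivity
    refine ⟨?_, ?_, ?_⟩
    · have h1 : R1 ^ 2 < ‖rePart z‖ ^ 2 + w.re ^ 2 := by linarith
      calc R1 = Real.sqrt (R1 ^ 2) := by rw [Real.sqrt_sq hR1]
        _ < _ := Real.sqrt_lt_sqrt (by positivity) h1
    · rw [show (1:ℝ) = Real.sqrt 1 by simp]
      exact Real.sqrt_lt_sqrt (by positivity) (by linarith)
    · rw [Real.sqrt_lt' hR2]
      linarith
end

section
/- With the notation of the preceding statement (a + ib with ‖a‖ ≤ R₁, in the envelope set E, and ε, U₁, U₂ chosen as there), the product U₁ × U₂ is contained in E := {x + iy ∈ ℂⁿ : ‖x‖ < 1, ‖y‖ < R₂, ‖y‖² < ‖x‖² − (R₁² − R₂²)}. -/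
open Complex

/-- The claimed envelope `E ⊆ ℂⁿ = ℂⁿ⁻¹ × ℂ` (here `m = n - 1`). -/
noncomputable def envEProd (m : ℕ) (R1 R2 : ℝ) : Set (EuclideanSpace ℂ (Fin m) × ℂ) :=
  {p | Real.sqrt (‖rePart p.1‖ ^ 2 + p.2.re ^ 2) < 1 ∧
       Real.sqrt (‖imPart p.1‖ ^ 2 + p.2.im ^ 2) < R2 ∧
       ‖imPart p.1‖ ^ 2 + p.2.im ^ 2 <
         (‖rePart p.1‖ ^ 2 + p.2.re ^ 2) - (R1 ^ 2 - R2 ^ 2)}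

theorem stmt_12 (m : ℕ) (hm : 1 ≤ m) (R1 R2 : ℝ) (hR1 : 0 ≤ R1) (hR1' : R1 < 1) (hR2 : 0 < R2)
    (at_ bt : EuclideanSpace ℝ (Fin m)) (an bn : ℝ)
    (haR1 : Real.sqrt (‖at_‖ ^ 2 + an ^ 2) ≤ R1)
    (ha1 : Real.sqrt (‖at_‖ ^ 2 + an ^ 2) < 1)
    (hb : Real.sqrt (‖bt‖ ^ 2 + bn ^ 2) < R2)
    (hab : ‖bt‖ ^ 2 + bn ^ 2 < (‖at_‖ ^ 2 + an ^ 2) - (R1 ^ 2 - R2 ^ 2))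
    (ε : ℝ) (hε0 : 0 < ε) (hε1 : R1 ^ 2 + 2 * ε < 1)
    (hε2 : ‖bt‖ ^ 2 + bn ^ 2 + 2 * ε < (‖at_‖ ^ 2 + an ^ 2) - (R1 ^ 2 - R2 ^ 2))
    (U1 : Set (EuclideanSpace ℂ (Fin m))) (U2 : Set ℂ)
    (hU1 : U1 = {zt | ‖at_‖ ^ 2 - ε / 4 < ‖rePart zt‖ ^ 2 ∧
        ‖rePart zt‖ ^ 2 < 1 - an ^ 2 - ε / 2 ∧ ‖imPart zt‖ ^ 2 < ‖bt‖ ^ 2 + ε / 2})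
    (hU2 : U2 = {w : ℂ | an ^ 2 - ε / 4 < w.re ^ 2 ∧ w.re ^ 2 < an ^ 2 + ε / 2 ∧
        w.im ^ 2 < bn ^ 2 + ε / 2}) :
    U1 ×ˢ U2 ⊆ envEProd m R1 R2 := by
  rintro ⟨z, w⟩ ⟨hz, hw⟩
  rw [hU1] at hz
  rw [hU2] at hw
  obtain ⟨h1, h2, h3⟩ := hz
  obtain ⟨h4, h5, h6⟩ := hw
  have ha2 : ‖at_‖ ^ 2 + an ^ 2 ≤ R1 ^ 2 := by
    have := Real.sq_sqrt (by positivity : (0:ℝ) ≤ ‖at_‖ ^ 2 + an ^ 2)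
    nlinarith [Real.sqrt_nonneg (‖at_‖ ^ 2 + an ^ 2)]
  simp only [envEProd, Set.mem_setOf_eq]
  refine ⟨?_, ?_, ?_⟩
  · rw [show (1:ℝ) = Real.sqrt 1 by simp]
    apply Real.sqrt_lt_sqrt (by positivity)
    linarith
  · rw [show R2 = Real.sqrt (R2 ^ 2) by rw [Real.sqrt_sq hR2.le]]
    apply Real.sqrt_lt_sqrt (by positivity)
    linarith
  · linarith
end

section
/- Let 0 ≤ R₂ ≤ R₁ < 1 and n ≥ 2 with R₂ > 0. There is a point w = x + iy ∈ ℂⁿ with ‖x‖ < 1 and ‖y‖ < R₂ (i.e., w in the convex hull of the truncated tube G) such that Re(w₁² + ⋯ + wₙ²) = R₁² − R₂², and hence the function 1/(z₁² + ⋯ + zₙ² − (R₁² − R₂²)), holomorphic on G, is singular at w; in particular the envelope of holomorphy of G cannot contain w. -/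
open Complex

theorem stmt_17 (n : ℕ) (hn : 2 ≤ n) (R1 R2 : ℝ) (hR2 : 0 < R2) (hR21 : R2 ≤ R1)
    (hR1' : R1 < 1) :
    ∃ w : EuclideanSpace ℂ (Fin n), ‖rePart w‖ < 1 ∧ ‖imPart w‖ < R2 ∧
      ‖rePart w‖ ^ 2 - ‖imPart w‖ ^ 2 = R1 ^ 2 - R2 ^ 2 ∧
      (∑ i, (w i) ^ 2) = ((R1 ^ 2 - R2 ^ 2 : ℝ) : ℂ) := by
  have hn0 : 0 < n := by omega
  set i₀ : Fin n := ⟨0, hn0⟩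
  set c : ℝ := Real.sqrt (R1 ^ 2 - R2 ^ 2) with hc
  have hsub : 0 ≤ R1 ^ 2 - R2 ^ 2 := by nlinarith
  have hc2 : c ^ 2 = R1 ^ 2 - R2 ^ 2 := Real.sq_sqrt hsub
  have hc0 : 0 ≤ c := Real.sqrt_nonneg _
  have hc1 : c < 1 := by nlinarith
  refine ⟨EuclideanSpace.single i₀ (c : ℂ), ?_, ?_, ?_, ?_⟩ <;>
    [skip; skip; skip;
     · rw [Finset.sum_eq_single i₀]
       · simp [EuclideanSpace.single_apply]
         norm_cast
       · intro b _ hb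
         simp [EuclideanSpace.single_apply, hb]
       · simp]
  all_goals
    have hre : rePart (EuclideanSpace.single i₀ (c : ℂ)) = EuclideanSpace.single i₀ c := by
      ext j
      by_cases h : j = i₀ <;> simp [rePart, EuclideanSpace.single_apply, h]
    have him : imPart (EuclideanSpace.single i₀ (c : ℂ)) = 0 := by
      ext j
      by_cases h : j = i₀ <;> simp [imPart, EuclideanSpace.single_apply, h]
  · rw [hre, EuclideanSpace.norm_single]
    rw [Real.norm_eq_abs, _root_.abs_of_nonneg hc0]; exact hc1
  · simp [him, hR2]
  · rw [hre, him, EuclideanSpace.norm_single]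
    simp [Real.norm_eq_abs, _root_.abs_of_nonneg hc0, hc2]
end
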